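/- Every minimizer ρ̄ of L(t) = min{ ∫(ρ^{5/3} + (3/4)ρ^{4/3} − ρ/|x|) dx : ρ ≥ 0, ∫ρ ≤ t } satisfies ∫ρ̄ dx = t. Equivalently, no minimizer can satisfy the unconstrained Euler–Lagrange equation (5/3)ρ̄^{2/3} + ρ̄^{1/3} = 1/|x|, since any solution of this equation behaves like |x|^{−3} at infinity and hence is not integrable. -/

import Mathlib

open MeasureTheory Real Set
open scoped ENNReal NNReal

local notation "ℝ³" => EuclideanSpace ℝ (Fin 3)

open Metric

lemma tfaux_rpow_sub_le {p : ℝ} (hp : 1 ≤ p) {a ε : ℝ} (ha : 0 ≤ a) (hε : 0 ≤ ε) :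
    (a + ε) ^ p - a ^ p ≤ p * (a + ε) ^ (p - 1) * ε := by
  rcases eq_or_lt_of_le hε with rfl | hε'
  · simp
  have hab : a < a + ε := by linarith
  obtain ⟨c, hc, hceq⟩ := exists_hasDerivAt_eq_slope (fun x => x ^ p)
    (fun x => p * x ^ (p - 1)) hab
    (fun x _ => (Real.continuousAt_rpow_const x p (Or.inr (by linarith))).continuousWithinAt)
    (fun x _ => Real.hasDerivAt_rpow_const (Or.inr hp))
  have hc0 : 0 ≤ c := le_trans ha hc.1.le
  field_simp at hceq
  have h2 : (a + ε) ^ p - a ^ p = p * c ^ (p - 1) * ε := by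
    rw [hceq, add_sub_cancel_left, div_mul_cancel₀ _ hε'.ne']
  rw [h2]
  have hcb : c ^ (p-1) ≤ (a+ε) ^ (p-1) :=
    Real.rpow_le_rpow hc0 hc.2.le (by linarith)
  have hp0 : (0:ℝ) ≤ p := by linarith
  gcongr

lemma tfaux_rpow_add_le {q : ℝ} (h0 : 0 ≤ q) (h1 : q ≤ 1) {a b : ℝ}
    (ha : 0 ≤ a) (hb : 0 ≤ b) : (a + b) ^ q ≤ a ^ q + b ^ q := by
  have h := NNReal.rpow_add_le_add_rpow a.toNNReal b.toNNReal h0 h1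
  have h2 := NNReal.coe_le_coe.2 h
  push_cast [NNReal.coe_rpow, Real.coe_toNNReal a ha, Real.coe_toNNReal b hb] at h2
  convert h2 using 2

lemma tfaux_no_ae_bound (ρ : ℝ³ → ℝ) (hnn : ∀ x, 0 ≤ ρ x) (hint : Integrable ρ)
    (hae : ∀ᵐ x : ℝ³, 1 ≤ ‖x‖ → 1 / (27 * ‖x‖ ^ 3) ≤ ρ x) : False := by
  set v : ℝ≥0∞ := volume (ball (0:ℝ³) 1) with hv
  have hv0 : 0 < v := measure_ball_pos _ _ one_pos
  have hvt : v ≠ ⊤ := measure_ball_lt_top.ne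
  have hfin : Module.finrank ℝ ℝ³ = 3 := by simp
  have hball : ∀ k : ℕ, volume (ball (0:ℝ³) (2^k)) = ENNReal.ofReal ((2:ℝ)^(3*k)) * v := by
    intro k
    rw [Measure.addHaar_ball volume (0:ℝ³) (by positivity : (0:ℝ) ≤ 2^k), hfin]
    congr 2
    rw [← pow_mul, mul_comm]
  set κ : ℝ := 7 * v.toReal / 216 with hκ
  have hκ0 : 0 < κ := by
    have : 0 < v.toReal := ENNReal.toReal_pos hv0.ne' hvt
    positivity
  have key : ∀ N : ℕ, (N:ℝ) * κ ≤ ∫ x in ball (0:ℝ³) (2^N), ρ x := by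
    intro N
    induction N with
    | zero =>
      simpa using setIntegral_nonneg measurableSet_ball (fun x _ => hnn x)
    | succ N ih =>
      have hsub : ball (0:ℝ³) (2^N) ⊆ ball (0:ℝ³) (2^(N+1)) :=
        ball_subset_ball (by norm_num [pow_succ])
      have hunion : ball (0:ℝ³) (2^(N+1)) =
          ball (0:ℝ³) (2^N) ∪ (ball (0:ℝ³) (2^(N+1)) \ ball (0:ℝ³) (2^N)) := by
        rw [union_diff_cancel hsub]
      set A : Set ℝ³ := ball (0:ℝ³) (2^(N+1)) \ ball (0:ℝ³) (2^N) with hA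
      have hAm : MeasurableSet A := measurableSet_ball.diff measurableSet_ball
      have hμA : (volume A).toReal = 7 * (2:ℝ)^(3*N) * v.toReal := by
        rw [hA, measure_diff hsub measurableSet_ball.nullMeasurableSet
            ((hball N ▸ ENNReal.mul_ne_top ENNReal.ofReal_ne_top hvt)),
          hball, hball, ← ENNReal.sub_mul (fun _ _ => hvt),
          ENNReal.toReal_mul, ENNReal.toReal_sub_of_le
            (ENNReal.ofReal_le_ofReal (by
              apply pow_le_pow_right₀ (by norm_num)
              omega)) ENNReal.ofReal_ne_top,
          ENNReal.toReal_ofReal (by positivity), ENNReal.toReal_ofReal (by positivity)]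
        rw [show 3*(N+1) = 3*N+3 by ring, pow_add]
        ring
      have hbound : ∫ x in A, (1 / (27 * (2:ℝ)^(3*(N+1))) : ℝ) ≤ ∫ x in A, ρ x := by
        apply setIntegral_mono_ae_restrict
        · exact integrableOn_const ((measure_mono (diff_subset)).trans_lt
            (by rw [hball]; exact ENNReal.mul_lt_top ENNReal.ofReal_lt_top hvt.lt_top)).ne
        · exact hint.integrableOn
        · filter_upwards [ae_restrict_mem hAm, ae_restrict_of_ae hae] with x hx hae'
          have h1 : (2:ℝ)^N ≤ ‖x‖ := by
            have := hx.2
            simp only [mem_ball, dist_zero_right, not_lt] at this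
            exact this
          have h2 : ‖x‖ < 2^(N+1) := by
            have := hx.1
            simpa [mem_ball, dist_zero_right] using this
          have h3 : (1:ℝ) ≤ ‖x‖ := le_trans (one_le_pow₀ (by norm_num)) h1
          refine le_trans ?_ (hae' h3)
          rw [div_le_div_iff₀ (by positivity) (by positivity)]
          have : ‖x‖^3 ≤ ((2:ℝ)^(N+1))^3 := by
            apply pow_le_pow_left₀ (by linarith) h2.le
          rw [← pow_mul, mul_comm (N+1) 3] at this
          nlinarith [this]
      have hconst : ∫ x in A, (1 / (27 * (2:ℝ)^(3*(N+1))) : ℝ) = κ := by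
        rw [setIntegral_const, smul_eq_mul, measureReal_def, hμA, hκ]
        rw [show 3*(N+1) = 3*N+3 by ring, pow_add]
        have h8 : (0:ℝ) < (2:ℝ)^(3*N) := by positivity
        field_simp
        ring
      have hsplit : ∫ x in ball (0:ℝ³) (2^(N+1)), ρ x
          = (∫ x in ball (0:ℝ³) (2^N), ρ x) + ∫ x in A, ρ x := by
        rw [hunion]
        exact setIntegral_union disjoint_sdiff_right hAm hint.integrableOn hint.integrableOn
      rw [hsplit]
      push_cast
      linarith [hbound, hconst ▸ hbound]
  obtain ⟨N, hN⟩ := exists_nat_gt ((∫ x, ρ x) / κ)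
  have h1 : (N:ℝ) * κ ≤ ∫ x, ρ x :=
    le_trans (key N) (setIntegral_le_integral hint (Filter.Eventually.of_forall hnn))
  rw [div_lt_iff₀ hκ0] at hN
  linarith

lemma tfaux_pointwise {a r : ℝ} (ha : 0 ≤ a) (hr : 1 ≤ r)
    (h : r⁻¹ ≤ 5/3 * a ^ ((2:ℝ)/3) + a ^ ((1:ℝ)/3)) : 1/(27 * r^3) ≤ a := by
  have hr0 : (0:ℝ) < r := lt_of_lt_of_le one_pos hr
  rcases le_or_gt a 1 with hle | hgt
  · rcases eq_or_lt_of_le ha with rfl | ha'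
    · rw [Real.zero_rpow (by norm_num), Real.zero_rpow (by norm_num)] at h
      simp at h
      linarith
    · have hmono : a ^ ((2:ℝ)/3) ≤ a ^ ((1:ℝ)/3) :=
        Real.rpow_le_rpow_of_exponent_ge ha' hle (by norm_num)
      have h3 : r⁻¹ ≤ 3 * a ^ ((1:ℝ)/3) := by
        have := Real.rpow_nonneg ha ((1:ℝ)/3)
        linarith
      have hcube : (r⁻¹)^3 ≤ (3 * a ^ ((1:ℝ)/3))^3 :=
        pow_le_pow_left₀ (inv_nonneg.2 hr0.le) h3 3
      have hb3 : (a ^ ((1:ℝ)/3))^(3:ℕ) = a := by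
        rw [← Real.rpow_natCast (a ^ ((1:ℝ)/3)) 3, ← Real.rpow_mul ha]
        norm_num
      have : (r^3)⁻¹ ≤ 27 * a := by
        rw [mul_pow, hb3] at hcube
        norm_num at hcube
        linarith
      rw [div_le_iff₀ (by positivity)]
      calc (1:ℝ) = r^3 * (r^3)⁻¹ := by field_simp
        _ ≤ r^3 * (27*a) := by
            apply mul_le_mul_of_nonneg_left this (by positivity)
        _ = a * (27 * r^3) := by ring
  · have h27 : (27:ℝ) ≤ 27 * r^3 := by
      have := one_le_pow₀ hr (n := 3)
      linarith
    calc 1/(27*r^3) ≤ 1/27 := one_div_le_one_div_of_le (by norm_num) h27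
      _ ≤ 1 := by norm_num
      _ ≤ a := hgt.le

/-- Thomas–Fermi + C₀ single-nucleus energy
`F(ρ) = ∫ (ρ^{5/3} + (3/4)ρ^{4/3} − ρ/|x|) dx`. -/
noncomputable def tfEnergy (ρ : ℝ³ → ℝ) : ℝ :=
  ∫ x : ℝ³, (ρ x ^ (5/3 : ℝ) + (3/4) * ρ x ^ (4/3 : ℝ) - ρ x / ‖x‖)

/-- Admissible densities of mass at most `t` with finite energy terms. -/
def tfAdm (t : ℝ) (ρ : ℝ³ → ℝ) : Prop :=
  (∀ x, 0 ≤ ρ x) ∧ Integrable ρ ∧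
    Integrable (fun x : ℝ³ => ρ x ^ (5/3 : ℝ)) ∧
    Integrable (fun x : ℝ³ => ρ x ^ (4/3 : ℝ)) ∧
    Integrable (fun x : ℝ³ => ρ x / ‖x‖) ∧ (∫ x, ρ x) ≤ t

set_option maxHeartbeats 2000000 in
/-- Every minimizer of the Thomas–Fermi + C₀ problem with mass constraint `t`
saturates the constraint: `∫ ρ̄ = t`. -/
theorem tf_minimizer_saturates_mass (t : ℝ) (ht : 0 ≤ t) (ρbar : ℝ³ → ℝ)
    (hadm : tfAdm t ρbar)
    (hmin : ∀ ρ, tfAdm t ρ → tfEnergy ρbar ≤ tfEnergy ρ) :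
    (∫ x, ρbar x) = t := by
  obtain ⟨hnn, hint, hint5, hint4, hintC, hle⟩ := hadm
  by_contra hne
  have hlt : (∫ x, ρbar x) < t := lt_of_le_of_ne hle hne
  -- measurable representative
  have asm : AEStronglyMeasurable ρbar volume := hint.aestronglyMeasurable
  set f : ℝ³ → ℝ := fun x => max (asm.mk ρbar x) 0 with hfdef
  have hf : Measurable f := asm.stronglyMeasurable_mk.measurable.max measurable_const
  have hf0 : ∀ x, 0 ≤ f x := fun x => le_max_right _ _
  have hfe : ρbar =ᵐ[volume] f := by
    filter_upwards [asm.ae_eq_mk] with x hx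
    rw [hfdef]
    simp only [← hx, max_eq_left (hnn x)]
  -- the gap function
  set g : ℝ³ → ℝ := fun x => ‖x‖⁻¹ - (5/3 * f x ^ ((2:ℝ)/3) + f x ^ ((1:ℝ)/3)) with hgdef
  have hgm : Measurable g := by
    apply (measurable_norm.inv).sub
    exact (((Real.continuous_rpow_const (by norm_num)).measurable.comp hf).const_mul
      (5/3)).add ((Real.continuous_rpow_const (by norm_num)).measurable.comp hf)
  -- Step A: the gap must be positive on a set of positive measure
  have hnot : ¬ ∀ᵐ x : ℝ³, g x ≤ 0 := by
    intro hae
    apply tfaux_no_ae_bound ρbar hnn hint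
    filter_upwards [hae, hfe] with x hg hx hr
    have hb : ‖x‖⁻¹ ≤ 5/3 * f x ^ ((2:ℝ)/3) + f x ^ ((1:ℝ)/3) := by
      rw [hgdef] at hg; simp only at hg; linarith
    have := tfaux_pointwise (hf0 x) hr hb
    rw [hx]
    exact this
  -- Step B: extract a good set S
  set Sn : ℕ → Set ℝ³ := fun n =>
    {x | (1:ℝ)/(n+1) ≤ g x} ∩ ({x | f x ≤ (n:ℝ)+1} ∩ {x | (1:ℝ)/(n+1) ≤ ‖x‖}) with hSndef
  have hSnm : ∀ n, MeasurableSet (Sn n) := fun n =>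
    (measurableSet_le measurable_const hgm).inter
      ((measurableSet_le hf measurable_const).inter
        (measurableSet_le measurable_const measurable_norm))
  have hsub : {x : ℝ³ | 0 < g x} ⊆ ⋃ n, Sn n := by
    intro x hx
    simp only [mem_setOf_eq] at hx
    have hxn : 0 < ‖x‖ := by
      rcases eq_or_lt_of_le (norm_nonneg x) with h0 | h
      · exfalso
        have h1 := Real.rpow_nonneg (hf0 x) ((2:ℝ)/3)
        have h2 := Real.rpow_nonneg (hf0 x) ((1:ℝ)/3)
        have hg0 : g x = 0 - (5/3 * f x ^ ((2:ℝ)/3) + f x ^ ((1:ℝ)/3)) := by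
          rw [hgdef]
          simp only
          rw [← h0]
          norm_num
        rw [hg0] at hx
        linarith
      · exact h
    obtain ⟨n, hn⟩ := exists_nat_gt (max (max (1/g x) (f x)) (1/‖x‖))
    have hn1 : 1/g x < (n:ℝ)+1 := by
      have := le_max_left (max (1/g x) (f x)) (1/‖x‖)
      have := le_max_left (1/g x) (f x)
      linarith [le_trans (le_max_left (1/g x) (f x))
        (le_max_left (max (1/g x) (f x)) (1/‖x‖))]
    have hn2 : f x < (n:ℝ)+1 := by
      linarith [le_trans (le_max_right (1/g x) (f x))
        (le_max_left (max (1/g x) (f x)) (1/‖x‖))]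
    have hn3 : 1/‖x‖ < (n:ℝ)+1 := by
      linarith [le_max_right (max (1/g x) (f x)) (1/‖x‖)]
    have hnp : (0:ℝ) < (n:ℝ)+1 := by positivity
    refine mem_iUnion.2 ⟨n, ⟨?_, ?_, ?_⟩⟩
    · simp only [mem_setOf_eq]
      rw [div_le_iff₀ hnp]
      rw [div_lt_iff₀ hx] at hn1
      linarith [mul_comm (g x) ((n:ℝ)+1)]
    · exact hn2.le
    · simp only [mem_setOf_eq]
      rw [div_le_iff₀ hnp]
      rw [div_lt_iff₀ hxn] at hn3
      linarith [mul_comm (‖x‖) ((n:ℝ)+1)]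
  obtain ⟨n, hSne⟩ : ∃ n, volume (Sn n) ≠ 0 := by
    by_contra hc
    push_neg at hc
    have h0 : volume (⋃ n, Sn n) = 0 := measure_iUnion_null hc
    have h1 : volume {x : ℝ³ | 0 < g x} = 0 := measure_mono_null hsub h0
    apply hnot
    rw [ae_iff]
    convert h1 using 2
    ext x
    simp [not_le]
  set S : Set ℝ³ := Sn n with hSdef
  have hSm : MeasurableSet S := hSnm n
  set c : ℝ := 1/((n:ℝ)+1) with hcdef
  have hc0 : 0 < c := by positivity
  have hc1 : c ≤ 1 := by
    rw [hcdef, div_le_one (by positivity)]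
    linarith [Nat.cast_nonneg (α := ℝ) n]
  -- properties of points of S
  have hSprop : ∀ x ∈ S, c ≤ g x ∧ f x ≤ (n:ℝ)+1 ∧ c ≤ ‖x‖ := by
    intro x hx
    exact ⟨hx.1, hx.2.1, hx.2.2⟩
  have hSball : S ⊆ closedBall (0:ℝ³) ((n:ℝ)+1) := by
    intro x hx
    obtain ⟨h1, _, h3⟩ := hSprop x hx
    have hxn : 0 < ‖x‖ := lt_of_lt_of_le hc0 h3
    have hgle : g x ≤ ‖x‖⁻¹ := by
      rw [hgdef]
      have h1 := Real.rpow_nonneg (hf0 x) ((2:ℝ)/3)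
      have h2 := Real.rpow_nonneg (hf0 x) ((1:ℝ)/3)
      simp only
      linarith
    have hinv : c ≤ ‖x‖⁻¹ := le_trans h1 hgle
    have : ‖x‖ ≤ c⁻¹ := by
      rw [← inv_inv ‖x‖]
      exact inv_anti₀ hc0 hinv
    rw [mem_closedBall, dist_zero_right]
    rw [hcdef] at this
    simpa using this
  have hSfin : volume S < ⊤ :=
    lt_of_le_of_lt (measure_mono hSball) measure_closedBall_lt_top
  set m : ℝ := (volume S).toReal with hmdef
  have hm0 : 0 < m := ENNReal.toReal_pos hSne hSfin.ne
  -- choice of ε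
  set ε : ℝ := min ((c/3)^3) ((t - ∫ x, ρbar x)/m) with hεdef
  have hε0 : 0 < ε := lt_min (by positivity) (div_pos (by linarith) hm0)
  have hε1 : ε ≤ 1 := le_trans (min_le_left _ _)
    (by nlinarith [pow_le_one₀ (by positivity : (0:ℝ) ≤ c/3) (by linarith : c/3 ≤ 1) (n := 3)])
  have hεm : ε * m ≤ t - ∫ x, ρbar x := by
    have := min_le_right ((c/3)^3) ((t - ∫ x, ρbar x)/m)
    rw [hεdef]
    calc min ((c/3)^3) ((t - ∫ x, ρbar x)/m) * m ≤ ((t - ∫ x, ρbar x)/m) * m := by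
          apply mul_le_mul_of_nonneg_right this hm0.le
      _ = t - ∫ x, ρbar x := by field_simp
  have hε13 : ε ^ ((1:ℝ)/3) ≤ c/3 := by
    have h1 : ε ^ ((1:ℝ)/3) ≤ ((c/3)^3) ^ ((1:ℝ)/3) :=
      Real.rpow_le_rpow hε0.le (min_le_left _ _) (by norm_num)
    have h2 : (((c/3):ℝ)^3) ^ ((1:ℝ)/3) = c/3 := by
      rw [← Real.rpow_natCast (c/3) 3, ← Real.rpow_mul (by positivity)]
      norm_num
    rw [h2] at h1
    exact h1
  have hε23 : ε ^ ((2:ℝ)/3) ≤ c/3 := by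
    have h1 : ε ^ ((2:ℝ)/3) = (ε ^ ((1:ℝ)/3))^(2:ℕ) := by
      rw [← Real.rpow_natCast (ε ^ ((1:ℝ)/3)) 2, ← Real.rpow_mul hε0.le]
      norm_num
    rw [h1]
    have h2 : (ε ^ ((1:ℝ)/3))^(2:ℕ) ≤ (c/3)^(2:ℕ) :=
      pow_le_pow_left₀ (Real.rpow_nonneg hε0.le _) hε13 2
    have h3 : ((c/3):ℝ)^(2:ℕ) ≤ c/3 := by nlinarith
    linarith
  have hεc : 5/3 * ε ^ ((2:ℝ)/3) + ε ^ ((1:ℝ)/3) ≤ 8/9 * c := by linarith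
  -- the perturbed density
  set ρ : ℝ³ → ℝ := fun x => ρbar x + S.indicator (fun _ => ε) x with hρdef
  have hindε : Integrable (S.indicator fun _ : ℝ³ => ε) := by
    rw [integrable_indicator_iff hSm]
    exact integrableOn_const hSfin.ne
  set d5 : ℝ³ → ℝ := fun x => (ρbar x + ε)^(5/3:ℝ) - ρbar x^(5/3:ℝ) with hd5def
  set d4 : ℝ³ → ℝ := fun x => (ρbar x + ε)^(4/3:ℝ) - ρbar x^(4/3:ℝ) with hd4def
  set w : ℝ³ → ℝ := S.indicator (fun x => ε/‖x‖) with hwdef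
  have hid5 : ∀ x, ρ x ^ (5/3:ℝ) = ρbar x^(5/3:ℝ) + S.indicator d5 x := by
    intro x
    by_cases hx : x ∈ S
    · simp only [hρdef, indicator_of_mem hx, hd5def]
      ring
    · simp [hρdef, indicator_of_notMem hx]
  have hid4 : ∀ x, ρ x ^ (4/3:ℝ) = ρbar x^(4/3:ℝ) + S.indicator d4 x := by
    intro x
    by_cases hx : x ∈ S
    · simp only [hρdef, indicator_of_mem hx, hd4def]
      ring
    · simp [hρdef, indicator_of_notMem hx]
  have hidC : ∀ x, ρ x / ‖x‖ = ρbar x/‖x‖ + w x := by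
    intro x
    by_cases hx : x ∈ S
    · simp only [hρdef, hwdef, indicator_of_mem hx]
      rw [add_div]
    · simp [hρdef, hwdef, indicator_of_notMem hx]
  -- integrability of the perturbation pieces
  have hd5m : AEStronglyMeasurable (S.indicator d5) volume := by
    have hmeas : Measurable (S.indicator (fun x : ℝ³ => (f x + ε)^(5/3:ℝ) - f x^(5/3:ℝ))) := by
      apply Measurable.indicator _ hSm
      exact ((Real.continuous_rpow_const (by norm_num)).measurable.comp
        (hf.add_const ε)).sub ((Real.continuous_rpow_const (by norm_num)).measurable.comp hf)
    refine aestronglyMeasurable_iff_aemeasurable.2 (hmeas.aemeasurable.congr ?_)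
    filter_upwards [hfe] with x hx
    by_cases hxS : x ∈ S
    · simp [indicator_of_mem hxS, hd5def, hx]
    · simp [indicator_of_notMem hxS]
  have hd4m : AEStronglyMeasurable (S.indicator d4) volume := by
    have hmeas : Measurable (S.indicator (fun x : ℝ³ => (f x + ε)^(4/3:ℝ) - f x^(4/3:ℝ))) := by
      apply Measurable.indicator _ hSm
      exact ((Real.continuous_rpow_const (by norm_num)).measurable.comp
        (hf.add_const ε)).sub ((Real.continuous_rpow_const (by norm_num)).measurable.comp hf)
    refine aestronglyMeasurable_iff_aemeasurable.2 (hmeas.aemeasurable.congr ?_)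
    filter_upwards [hfe] with x hx
    by_cases hxS : x ∈ S
    · simp [indicator_of_mem hxS, hd4def, hx]
    · simp [indicator_of_notMem hxS]
  have hd5int : Integrable (S.indicator d5) := by
    refine Integrable.mono' ((integrable_indicator_iff hSm).2
      (integrableOn_const hSfin.ne) :
        Integrable (S.indicator fun _ : ℝ³ => 2*(((n:ℝ)+2)^(5/3:ℝ)))) hd5m ?_
    filter_upwards [hfe] with x hx
    by_cases hxS : x ∈ S
    · simp only [indicator_of_mem hxS, hd5def]
      have hb : ρbar x ≤ (n:ℝ)+1 := by rw [hx]; exact (hSprop x hxS).2.1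
      have h1 : (ρbar x + ε)^(5/3:ℝ) ≤ ((n:ℝ)+2)^(5/3:ℝ) :=
        Real.rpow_le_rpow (by linarith [hnn x]) (by linarith) (by norm_num)
      have h2 : ρbar x^(5/3:ℝ) ≤ ((n:ℝ)+2)^(5/3:ℝ) :=
        Real.rpow_le_rpow (hnn x) (by linarith) (by norm_num)
      have h3 : (0:ℝ) ≤ (ρbar x + ε)^(5/3:ℝ) := Real.rpow_nonneg (by linarith [hnn x]) _
      have h4 : (0:ℝ) ≤ ρbar x^(5/3:ℝ) := Real.rpow_nonneg (hnn x) _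
      rw [Real.norm_eq_abs, abs_le]
      constructor <;> linarith
    · simp [indicator_of_notMem hxS]
  have hd4int : Integrable (S.indicator d4) := by
    refine Integrable.mono' ((integrable_indicator_iff hSm).2
      (integrableOn_const hSfin.ne) :
        Integrable (S.indicator fun _ : ℝ³ => 2*(((n:ℝ)+2)^(4/3:ℝ)))) hd4m ?_
    filter_upwards [hfe] with x hx
    by_cases hxS : x ∈ S
    · simp only [indicator_of_mem hxS, hd4def]
      have hb : ρbar x ≤ (n:ℝ)+1 := by rw [hx]; exact (hSprop x hxS).2.1
      have h1 : (ρbar x + ε)^(4/3:ℝ) ≤ ((n:ℝ)+2)^(4/3:ℝ) :=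
        Real.rpow_le_rpow (by linarith [hnn x]) (by linarith) (by norm_num)
      have h2 : ρbar x^(4/3:ℝ) ≤ ((n:ℝ)+2)^(4/3:ℝ) :=
        Real.rpow_le_rpow (hnn x) (by linarith) (by norm_num)
      have h3 : (0:ℝ) ≤ (ρbar x + ε)^(4/3:ℝ) := Real.rpow_nonneg (by linarith [hnn x]) _
      have h4 : (0:ℝ) ≤ ρbar x^(4/3:ℝ) := Real.rpow_nonneg (hnn x) _
      rw [Real.norm_eq_abs, abs_le]
      constructor <;> linarith
    · simp [indicator_of_notMem hxS]
  have hwm : Measurable w := (measurable_const.div measurable_norm).indicator hSm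
  have hwint : Integrable w := by
    refine Integrable.mono' ((integrable_indicator_iff hSm).2
      (integrableOn_const hSfin.ne) :
        Integrable (S.indicator fun _ : ℝ³ => ε*((n:ℝ)+1))) hwm.aestronglyMeasurable ?_
    apply Filter.Eventually.of_forall
    intro x
    by_cases hxS : x ∈ S
    · simp only [hwdef, indicator_of_mem hxS]
      have h3 : c ≤ ‖x‖ := (hSprop x hxS).2.2
      have hx0 : (0:ℝ) < ‖x‖ := lt_of_lt_of_le hc0 h3
      rw [Real.norm_eq_abs, abs_of_nonneg (by positivity), div_le_iff₀ hx0]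
      have h1 : (1:ℝ) ≤ ((n:ℝ)+1)*‖x‖ := by
        rw [hcdef, div_le_iff₀ (by positivity : (0:ℝ) < (n:ℝ)+1)] at h3
        linarith [mul_comm ‖x‖ ((n:ℝ)+1)]
      nlinarith [hε0.le]
    · simp [hwdef, indicator_of_notMem hxS]
  -- ρ is admissible
  have hadmρ : tfAdm t ρ := by
    refine ⟨fun x => add_nonneg (hnn x) (indicator_nonneg (fun _ _ => hε0.le) x),
      hint.add hindε, ?_, ?_, ?_, ?_⟩
    · rw [show (fun x : ℝ³ => ρ x ^(5/3:ℝ))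
        = fun x => ρbar x^(5/3:ℝ) + S.indicator d5 x from funext hid5]
      exact hint5.add hd5int
    · rw [show (fun x : ℝ³ => ρ x ^(4/3:ℝ))
        = fun x => ρbar x^(4/3:ℝ) + S.indicator d4 x from funext hid4]
      exact hint4.add hd4int
    · rw [show (fun x : ℝ³ => ρ x / ‖x‖)
        = fun x => ρbar x/‖x‖ + w x from funext hidC]
      exact hintC.add hwint
    · rw [show (∫ x, ρ x) = (∫ x, ρbar x) + ∫ x, S.indicator (fun _ => ε) x from
        integral_add hint hindε, integral_indicator_const ε hSm, measureReal_def]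
      have hsm : (volume S).toReal • ε = ε * m := by
        rw [hmdef, smul_eq_mul, mul_comm]
      rw [hsm]
      linarith [hεm]
  -- energy splits
  set D : ℝ³ → ℝ := fun x => S.indicator d5 x + (3/4) * S.indicator d4 x - w x with hDdef
  have hDint : Integrable D := (hd5int.add (hd4int.const_mul (3/4))).sub hwint
  have hE : tfEnergy ρ = tfEnergy ρbar + ∫ x, D x := by
    have hfun : (fun x : ℝ³ => ρ x^(5/3:ℝ) + (3/4)*ρ x^(4/3:ℝ) - ρ x/‖x‖)
        = fun x => (ρbar x^(5/3:ℝ) + (3/4)*ρbar x^(4/3:ℝ) - ρbar x/‖x‖) + D x := by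
      funext x
      rw [hid5 x, hid4 x, hidC x, hDdef]
      ring
    rw [tfEnergy, tfEnergy, hfun]
    exact integral_add ((hint5.add (hint4.const_mul (3/4))).sub hintC) hDint
  -- the energy strictly decreases
  have hDneg : ∫ x, D x ≤ m * (-(ε*c/9)) := by
    have hRint : Integrable (S.indicator fun _ : ℝ³ => -(ε*c/9)) :=
      (integrable_indicator_iff hSm).2 (integrableOn_const hSfin.ne)
    have hb : ∀ᵐ x : ℝ³, D x ≤ S.indicator (fun _ => -(ε*c/9)) x := by
      filter_upwards [hfe] with x hx
      by_cases hxS : x ∈ S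
      · simp only [hDdef, hwdef, indicator_of_mem hxS, hd5def, hd4def]
        obtain ⟨hg1, hfb, h3n⟩ := hSprop x hxS
        have ha0 : 0 ≤ ρbar x := hnn x
        have hgap : 5/3 * ρbar x^((2:ℝ)/3) + ρbar x^((1:ℝ)/3) ≤ ‖x‖⁻¹ - c := by
          rw [hgdef] at hg1
          simp only at hg1
          rw [← hx] at hg1
          linarith
        have h5 := tfaux_rpow_sub_le (p := (5/3:ℝ)) (by norm_num) ha0 hε0.le
        norm_num at h5
        have h4 := tfaux_rpow_sub_le (p := (4/3:ℝ)) (by norm_num) ha0 hε0.le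
        norm_num at h4
        have hs2 := tfaux_rpow_add_le (q := (2/3:ℝ)) (by norm_num) (by norm_num) ha0 hε0.le
        have hs1 := tfaux_rpow_add_le (q := (1/3:ℝ)) (by norm_num) (by norm_num) ha0 hε0.le
        have e5 : (ρbar x+ε)^(5/3:ℝ) - ρbar x^(5/3:ℝ)
            ≤ 5/3 * (ρbar x^((2:ℝ)/3) + ε^((2:ℝ)/3)) * ε := by
          have := mul_le_mul_of_nonneg_right
            (mul_le_mul_of_nonneg_left hs2 (by norm_num : (0:ℝ) ≤ 5/3)) hε0.le
          linarith
        have e4 : (ρbar x+ε)^(4/3:ℝ) - ρbar x^(4/3:ℝ)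
            ≤ 4/3 * (ρbar x^((1:ℝ)/3) + ε^((1:ℝ)/3)) * ε := by
          have := mul_le_mul_of_nonneg_right
            (mul_le_mul_of_nonneg_left hs1 (by norm_num : (0:ℝ) ≤ 4/3)) hε0.le
          linarith
        have m1 : ε * (5/3 * ρbar x^((2:ℝ)/3) + ρbar x^((1:ℝ)/3)) ≤ ε * (‖x‖⁻¹ - c) :=
          mul_le_mul_of_nonneg_left hgap hε0.le
        have m2 : ε * (5/3*ε^((2:ℝ)/3) + ε^((1:ℝ)/3)) ≤ ε * (8/9*c) :=
          mul_le_mul_of_nonneg_left hεc hε0.le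
        rw [div_eq_mul_inv ε ‖x‖]
        nlinarith [e5, e4, m1, m2]
      · simp [hDdef, hwdef, indicator_of_notMem hxS]
    have h := integral_mono_ae hDint hRint hb
    rw [integral_indicator_const _ hSm] at h
    rw [smul_eq_mul, measureReal_def, ← hmdef] at h
    exact h
  have hcontr := hmin ρ hadmρ
  rw [hE] at hcontr
  have hpos : 0 < m * (ε*c/9) := by positivity
  nlinarith [hDneg, hcontr]
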